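/- Fix integers 1 ≤ k ≤ n, set m = n − k, and let λ be a partition in the k×m box. Let F be the standard flag and F̃ the opposite flag of ℂ^n. Then Ω_λ(F) ∩ Ω_{λ^∨}(F̃) consists of exactly one point, namely the coordinate subspace E_λ = span(e_{p_1(λ)},…,e_{p_k(λ)}): a k-dimensional subspace L ⊆ ℂ^n satisfies dim(L ∩ F_{p_j(λ)}) ≥ j and dim(L ∩ F̃_{p_j(λ^∨)}) ≥ j for all 1 ≤ j ≤ k if and only if L = E_λ. (This realizes the intersection number ∫ σ_λ · σ_{λ^∨} = 1 on Gr(k,n).) -/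

import Mathlib

/-- The coordinate subspace of `ℂ^n` spanned by the standard basis vectors `e_j`, `j ∈ s`. -/
noncomputable def coordSub (n : ℕ) (s : Set (Fin n)) : Submodule ℂ (Fin n → ℂ) :=
  Submodule.span ℂ ((fun j => Pi.single j (1 : ℂ)) '' s)

/-- The standard flag of `ℂ^n`: `stdFlag n i = span(e_1, …, e_{i+1})` (0-indexed `i`,
so `stdFlag n i` has dimension `i + 1`). -/
noncomputable def stdFlag (n : ℕ) (i : Fin n) : Submodule ℂ (Fin n → ℂ) :=
  coordSub n {j | j ≤ i}

/-- The opposite flag of `ℂ^n`: `oppFlag n i` is the span of the last `i + 1` standard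
basis vectors (0-indexed `i`, so `oppFlag n i` has dimension `i + 1`). -/
noncomputable def oppFlag (n : ℕ) (i : Fin n) : Submodule ℂ (Fin n → ℂ) :=
  coordSub n {j | n ≤ j.val + i.val + 1}

/-- The jump positions of a sequence `lam` in the `k × (n-k)` box, as indices into a
complete flag of `ℂ^n`: `posIdx n k hk lam j` is the 0-indexed position whose
1-indexed value is `p_j(lam) = (n-k) + (j+1) - lam j`. -/
def posIdx (n k : ℕ) (hk : k ≤ n) (lam : Fin k → ℕ) (j : Fin k) : Fin n :=
  ⟨(n - k) + j.val - lam j, by have := j.isLt; omega⟩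

/-- Membership of a subspace `L` in the Schubert variety `Ω_lam(G)` for a complete flag
`G` of `ℂ^n` (where `G i` has dimension `i + 1`): `dim (L ⊓ G (p_j lam)) ≥ j` for all
`j = 1, …, k` (1-indexed). -/
def inSchubert (n k : ℕ) (hk : k ≤ n) (G : Fin n → Submodule ℂ (Fin n → ℂ))
    (lam : Fin k → ℕ) (L : Submodule ℂ (Fin n → ℂ)) : Prop :=
  ∀ j : Fin k, j.val + 1 ≤ Module.finrank ℂ ↥(L ⊓ G (posIdx n k hk lam j))

/-- The coordinate subspace `E_lam = span(e_{p_1(lam)}, …, e_{p_k(lam)})` of `ℂ^n`. -/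
noncomputable def coordE (n k : ℕ) (hk : k ≤ n) (lam : Fin k → ℕ) :
    Submodule ℂ (Fin n → ℂ) :=
  coordSub n (Set.range (posIdx n k hk lam))

/-- The dual of a sequence `lam` in the `k × m` box. -/
def boxDual (k m : ℕ) (lam : Fin k → ℕ) : Fin k → ℕ :=
  fun i => m - lam i.rev

/-!
If `L` satisfies both sets of conditions, then for each `j` the subspaces `L ∩ F_{p_j}` and
`L ∩ F̃_{p_{k+1-j}(λ^∨)}` have dimensions at least `j` and `k + 1 - j` inside the `k`-dimensional
`L`, so they meet nontrivially. Both flag pieces are coordinate subspaces, and the dual partition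
is chosen so that `F̃_{p_{k+1-j}(λ^∨)}` is spanned by the `e_t` with `t ≥ p_j(λ)`; hence
`F_{p_j} ∩ F̃_{p_{k+1-j}(λ^∨)} = ℂ e_{p_j}`, so `e_{p_j} ∈ L`. Thus `E_λ ⊆ L`, with equality by
dimension. Conversely, `E_λ ∩ F_{p_j}` and `E_λ ∩ F̃_{p_{k+1-j}(λ^∨)}` contain the spans of
`e_{p_1}, …, e_{p_j}` and of `e_{p_j}, …, e_{p_k}`.
-/

open Set Module

lemma Submodule.finrank_inf_add_finrank_inf_le {K V : Type*} [DivisionRing K] [AddCommGroup V]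
    [Module K V] [FiniteDimensional K V] (L U W : Submodule K V) :
    finrank K ↥(L ⊓ U) + finrank K ↥(L ⊓ W) ≤ finrank K ↥(L ⊓ (U ⊓ W)) + finrank K ↥L := by
  have hsup : finrank K ↥(L ⊓ U ⊔ L ⊓ W) ≤ finrank K ↥L :=
    Submodule.finrank_mono (sup_le inf_le_left inf_le_left)
  have hinf : L ⊓ U ⊓ (L ⊓ W) = L ⊓ (U ⊓ W) := inf_inf_distrib_left L U W |>.symm
  have := Submodule.finrank_sup_add_finrank_inf_eq (L ⊓ U) (L ⊓ W)
  rw [hinf] at this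
  omega

section coordSub

variable {n : ℕ}

lemma coordSub_le_iff {s : Set (Fin n)} {L : Submodule ℂ (Fin n → ℂ)} :
    coordSub n s ≤ L ↔ ∀ i ∈ s, Pi.single i (1 : ℂ) ∈ L := by
  rw [coordSub, Submodule.span_le, image_subset_iff]
  rfl

lemma mem_coordSub {s : Set (Fin n)} {x : Fin n → ℂ} :
    x ∈ coordSub n s ↔ ∀ j ∉ s, x j = 0 := by
  have hbasis : (fun j => Pi.single j (1 : ℂ)) = Pi.basisFun ℂ (Fin n) :=
    funext fun j => (Pi.basisFun_apply ℂ (Fin n) j).symm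
  rw [coordSub, hbasis, Module.Basis.mem_span_image]
  simp only [subset_def, Finset.mem_coe, Finsupp.mem_support_iff, Pi.basisFun_repr]
  exact forall_congr' fun j => not_imp_comm

lemma coordSub_inf (s t : Set (Fin n)) : coordSub n s ⊓ coordSub n t = coordSub n (s ∩ t) := by
  ext x
  simp only [Submodule.mem_inf, mem_coordSub, mem_inter_iff, not_and_or]
  grind

lemma finrank_coordSub (s : Set (Fin n)) : finrank ℂ ↥(coordSub n s) = s.ncard := by
  classical
  have hli := Pi.linearIndependent_single_one (Fin n) ℂ
  rw [coordSub, finrank_span_set_eq_card (hli.linearIndepOn s).id_image,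
    ← ncard_eq_toFinset_card', ncard_image_of_injective s hli.injective]

lemma single_mem_of_finrank_lt {L : Submodule ℂ (Fin n → ℂ)} {i : Fin n}
    (h : finrank ℂ ↥L <
      finrank ℂ ↥(L ⊓ coordSub n (Iic i)) + finrank ℂ ↥(L ⊓ coordSub n (Ici i))) :
    Pi.single i (1 : ℂ) ∈ L := by
  have hline : coordSub n (Iic i) ⊓ coordSub n (Ici i) = coordSub n {i} := by
    rw [coordSub_inf, Iic_inter_Ici, Icc_self]
  have hmeet := Submodule.finrank_inf_add_finrank_inf_le L (coordSub n (Iic i)) (coordSub n (Ici i))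
  rw [hline] at hmeet
  have hle : coordSub n {i} ≤ L := inf_eq_right.mp <| Submodule.eq_of_le_of_finrank_le
    inf_le_right (by rw [finrank_coordSub, ncard_singleton]; omega)
  exact coordSub_le_iff.mp hle i rfl

lemma ncard_le_finrank_coordSub_range_inf {ι : Type*} {p : ι → Fin n} (hp : p.Injective)
    {T : Set ι} {s : Set (Fin n)} (hT : p '' T ⊆ s) :
    T.ncard ≤ finrank ℂ ↥(coordSub n (range p) ⊓ coordSub n s) := by
  rw [coordSub_inf, finrank_coordSub, ← ncard_image_of_injective T hp]
  exact ncard_le_ncard (subset_inter (image_subset_range p T) hT) (toFinite _)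

end coordSub

section posIdx

variable {n k : ℕ} (hkn : k ≤ n) {lam : Fin k → ℕ}

lemma posIdx_strictMono (hanti : Antitone lam) (hbd : ∀ i, lam i ≤ n - k) :
    StrictMono (posIdx n k hkn lam) := by
  intro i j hij
  have := hanti hij.le
  have := hbd i
  rw [Fin.lt_def] at hij ⊢
  simp only [posIdx]
  omega

lemma finrank_coordE (hp : (posIdx n k hkn lam).Injective) :
    finrank ℂ ↥(coordE n k hkn lam) = k := by
  rw [coordE, finrank_coordSub, ncard_range_of_injective hp, Nat.card_eq_fintype_card,
    Fintype.card_fin]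

lemma oppFlag_posIdx_boxDual_rev {j : Fin k} (hj : lam j ≤ n - k) :
    oppFlag n (posIdx n k hkn (boxDual k (n - k) lam) j.rev) =
      coordSub n (Ici (posIdx n k hkn lam j)) := by
  rw [oppFlag]
  congr 1
  ext t
  simp only [mem_ofPred_eq, mem_Ici, Fin.le_def, posIdx, boxDual, Fin.rev_rev, Fin.val_rev]
  omega

lemma inSchubert_oppFlag_boxDual_iff (hbd : ∀ i, lam i ≤ n - k) {L : Submodule ℂ (Fin n → ℂ)} :
    inSchubert n k hkn (oppFlag n) (boxDual k (n - k) lam) L ↔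
      ∀ j : Fin k, k - j ≤ finrank ℂ ↥(L ⊓ coordSub n (Ici (posIdx n k hkn lam j))) := by
  rw [inSchubert, Fin.rev_surjective.forall]
  refine forall_congr' fun j => ?_
  rw [oppFlag_posIdx_boxDual_rev hkn (hbd j), Fin.val_rev]
  have := j.isLt
  rw [show k - (j + 1) + 1 = k - j by omega]

lemma coordE_le_of_inSchubert {L : Submodule ℂ (Fin n → ℂ)} (hdim : finrank ℂ ↥L = k)
    (hstd : inSchubert n k hkn (stdFlag n) lam L)
    (hopp : ∀ j : Fin k, k - j ≤ finrank ℂ ↥(L ⊓ coordSub n (Ici (posIdx n k hkn lam j)))) :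
    coordE n k hkn lam ≤ L := by
  rw [coordE, coordSub_le_iff]
  rintro _ ⟨j, rfl⟩
  apply single_mem_of_finrank_lt
  have hlow : j + 1 ≤ finrank ℂ ↥(L ⊓ coordSub n (Iic (posIdx n k hkn lam j))) := hstd j
  have := hopp j
  have := j.isLt
  omega

lemma inSchubert_stdFlag_coordE (hp : StrictMono (posIdx n k hkn lam)) :
    inSchubert n k hkn (stdFlag n) lam (coordE n k hkn lam) := fun j => by
  have := ncard_le_finrank_coordSub_range_inf hp.injective (T := Iic j)
    (s := Iic (posIdx n k hkn lam j)) (image_subset_iff.mpr fun _ hi => hp.monotone hi)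
  rwa [ncard_eq_toFinset_card', toFinset_Iic, Fin.card_Iic] at this

lemma le_finrank_coordE_inf_coordSub_Ici (hp : StrictMono (posIdx n k hkn lam)) (j : Fin k) :
    k - j ≤ finrank ℂ ↥(coordE n k hkn lam ⊓ coordSub n (Ici (posIdx n k hkn lam j))) := by
  have := ncard_le_finrank_coordSub_range_inf hp.injective (T := Ici j)
    (s := Ici (posIdx n k hkn lam j)) (image_subset_iff.mpr fun _ hi => hp.monotone hi)
  rwa [ncard_eq_toFinset_card', toFinset_Ici, Fin.card_Ici] at this

end posIdx

theorem schubert_inter_dual_unique_general (n k : ℕ) (hkn : k ≤ n)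
    (lam : Fin k → ℕ)
    (hanti : ∀ i j : Fin k, i ≤ j → lam j ≤ lam i)
    (hbd : ∀ i, lam i ≤ n - k)
    (L : Submodule ℂ (Fin n → ℂ)) :
    (Module.finrank ℂ ↥L = k ∧
        inSchubert n k hkn (stdFlag n) lam L ∧
        inSchubert n k hkn (oppFlag n) (boxDual k (n - k) lam) L) ↔
      L = coordE n k hkn lam := by
  have hp := posIdx_strictMono hkn hanti hbd
  rw [inSchubert_oppFlag_boxDual_iff hkn hbd]
  constructor
  · rintro ⟨hdim, hstd, hopp⟩
    refine (Submodule.eq_of_le_of_finrank_le (coordE_le_of_inSchubert hkn hdim hstd hopp) ?_).symm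
    rw [hdim, finrank_coordE hkn hp.injective]
  · rintro rfl
    exact ⟨finrank_coordE hkn hp.injective, inSchubert_stdFlag_coordE hkn hp,
      le_finrank_coordE_inf_coordSub_Ici hkn hp⟩

/-- For a partition `lam` in the `k × (n-k)` box, the intersection
`Ω_lam(F) ∩ Ω_{lam^∨}(F̃)` of the Schubert varieties for the standard flag `F` and the
opposite flag `F̃` consists of exactly one point, the coordinate subspace
`E_lam = span(e_{p_1(lam)}, …, e_{p_k(lam)})`: a `k`-dimensional subspace `L ⊆ ℂ^n`
satisfies both collections of Schubert conditions iff `L = E_lam`.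
(This realizes the intersection number `∫ σ_lam · σ_{lam^∨} = 1` on `Gr(k,n)`.) -/
theorem schubert_inter_dual_unique (n k : ℕ) (hk1 : 1 ≤ k) (hkn : k ≤ n)
    (lam : Fin k → ℕ)
    (hanti : ∀ i j : Fin k, i ≤ j → lam j ≤ lam i)
    (hbd : ∀ i, lam i ≤ n - k)
    (L : Submodule ℂ (Fin n → ℂ)) :
    (Module.finrank ℂ ↥L = k ∧
        inSchubert n k hkn (stdFlag n) lam L ∧
        inSchubert n k hkn (oppFlag n) (boxDual k (n - k) lam) L) ↔
      L = coordE n k hkn lam :=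
  schubert_inter_dual_unique_general n k hkn lam hanti hbd L
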